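/- Let μ̂ be a probability measure on Σ × M with first marginal ℙ whose disintegration with respect to ℙ has the form μ̂_ω = μ_{ω₀} for a family {μ_α : α ∈ E} of probability measures on M. Then μ̂ is invariant under the skew product F(ω,x) = (σ(ω), f_{ω₀}(x)) if and only if μ_α = ∫ (f_β)_*μ_β q(α,dβ) for m-almost every α. -/

import Mathlib

open MeasureTheory ProbabilityTheory ENNReal

noncomputable def chainProb {E : Type*} [MeasurableSpace E] (p : ProbabilityTheory.Kernel E E) :
    ℕ → (ℕ → Set E) → E → ℝ≥0∞
  | 0, _, _ => 1
  | (n + 1), A, α => ∫⁻ β in A 0, chainProb p n (fun i => A (i + 1)) β ∂(p α)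

def IsMarkovMeasure {E : Type*} [MeasurableSpace E] (p : ProbabilityTheory.Kernel E E)
    (m : Measure E) (P : Measure (ℕ → E)) : Prop :=
  ∀ (n : ℕ) (A : ℕ → Set E), (∀ i, MeasurableSet (A i)) →
    P {ω | ∀ i ≤ n, ω i ∈ A i} = ∫⁻ α in A 0, chainProb p n (fun i => A (i + 1)) α ∂m

/-- The skew product `F(ω,x) = (σω, f_{ω₀}(x))`. -/
def skewF {E M : Type*} (f : E → M → M) (z : (ℕ → E) × M) : (ℕ → E) × M :=
  (fun n => z.1 (n + 1), f (z.1 0) z.2)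


/-!
Let `κ` be the kernel `α ↦ μ_α`, so that the disintegration hypothesis reads `μ̂ = ℙ ⊗ κ(ω₀)`.
Duality of `p` and `q` says that the swap pushes `m ⊗ p` forward to `m ⊗ q`; combined with the
Markov property this shows that under `ℙ` the pair `(σω, ω₀)` has law `ℙ ⊗ q(ω₀, ·)`, i.e. the
chain read backwards from `σω` moves by `q`. Consequently `F_*μ̂ = ℙ ⊗ ν(ω₀)` with
`ν_α = ∫ (f_β)_*μ_β q(α,dβ)`, and two composition-products `ℙ ⊗ κ(ω₀)`, `ℙ ⊗ ν(ω₀)` agree iff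
`κ = ν` almost everywhere for the law `m` of `ω₀` (`M` is standard Borel, hence countably
generated).
-/

namespace MeasureTheory.Measure

variable {α β γ : Type*} [MeasurableSpace α] [MeasurableSpace β] [MeasurableSpace γ]

lemma map_prodMap_compProd_comap (μ : Measure α) [SFinite μ] {g : α → γ} (hg : Measurable g)
    (κ : Kernel γ β) [IsSFiniteKernel κ] :
    (μ ⊗ₘ κ.comap g hg).map (Prod.map g id) = μ.map g ⊗ₘ κ := by
  ext s hs
  have hsec : Measurable fun c => κ c (Prod.mk c ⁻¹' s) := Kernel.measurable_kernel_prodMk_left hs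
  rw [map_apply (hg.prodMap measurable_id) hs, compProd_apply (hg.prodMap measurable_id hs),
    compProd_apply hs, lintegral_map hsec hg]
  rfl

lemma compProd_comap_eq_iff [MeasurableSpace.CountableOrCountablyGenerated γ β]
    (μ : Measure α) [IsFiniteMeasure μ] {g : α → γ} (hg : Measurable g)
    {κ η : Kernel γ β} [IsFiniteKernel κ] [IsFiniteKernel η] :
    μ ⊗ₘ κ.comap g hg = μ ⊗ₘ η.comap g hg ↔ κ =ᵐ[μ.map g] η := by
  refine ⟨fun h => Kernel.ae_eq_of_compProd_eq ?_, fun h => compProd_congr ?_⟩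
  · rw [← map_prodMap_compProd_comap μ hg, h, map_prodMap_compProd_comap]
  · exact ae_of_ae_map hg.aemeasurable h

end MeasureTheory.Measure

def tailHead {E : Type*} (ω : ℕ → E) : (ℕ → E) × E :=
  (fun n => ω (n + 1), ω 0)

lemma tailHead_preimage_cylinder_prod {E : Type*} (n : ℕ) (A : ℕ → Set E) (C : Set E) :
    tailHead ⁻¹' ({ω | ∀ i ≤ n, ω i ∈ A i} ×ˢ C)
      = {ω | ∀ i ≤ n + 1, ω i ∈ (fun | 0 => C | k + 1 => A k : ℕ → Set E) i} := by
  ext ω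
  simp only [tailHead, Set.mem_preimage, Set.mem_prod, Set.mem_ofPred_eq]
  refine ⟨fun ⟨htail, h0⟩ i hi => ?_, fun h => ⟨fun k hk => h (k + 1) (by omega), h 0 (by omega)⟩⟩
  cases i with
  | zero => exact h0
  | succ k => exact htail k (by omega)

lemma eval_zero_preimage_inter_cylinder {E : Type*} (n : ℕ) (A : ℕ → Set E) (S : Set E) :
    (fun ω : ℕ → E => ω 0) ⁻¹' S ∩ {ω | ∀ i ≤ n, ω i ∈ A i}
      = {ω | ∀ i ≤ n, ω i ∈ Function.update A 0 (A 0 ∩ S) i} := by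
  ext ω
  simp only [Set.mem_inter_iff, Set.mem_preimage, Set.mem_ofPred_eq]
  refine ⟨fun ⟨h0, h⟩ i hi => ?_, fun h => ⟨?_, fun i hi => ?_⟩⟩
  · rcases eq_or_ne i 0 with rfl | hi0
    · simpa using ⟨h 0 hi, h0⟩
    · simpa [hi0] using h i hi
  · simpa using (h 0 (Nat.zero_le n)).2
  · rcases eq_or_ne i 0 with rfl | hi0
    · simpa using (h 0 hi).1
    · simpa [hi0] using h i hi

section MarkovMeasure

variable {E : Type*} [MeasurableSpace E] {p q : Kernel E E} {m : Measure E} {P : Measure (ℕ → E)}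

lemma measurable_tailHead : Measurable (tailHead : (ℕ → E) → (ℕ → E) × E) := by
  unfold tailHead
  fun_prop

lemma map_swap_compProd_of_dual [IsFiniteMeasure m] [IsFiniteKernel p] [IsSFiniteKernel q]
    (hdual : ∀ A B : Set E, MeasurableSet A → MeasurableSet B →
      ∫⁻ α in B, p α A ∂m = ∫⁻ β in A, q β B ∂m) :
    (m ⊗ₘ p).map Prod.swap = m ⊗ₘ q := by
  refine Measure.ext_prod fun {A B} hA hB => ?_
  rw [Measure.map_apply measurable_swap (hA.prod hB), Set.preimage_swap_prod,
    Measure.compProd_apply_prod hB hA, Measure.compProd_apply_prod hA hB, hdual A B hA hB]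

lemma setLIntegral_setLIntegral_of_dual [IsFiniteMeasure m] [IsFiniteKernel p] [IsSFiniteKernel q]
    (hdual : ∀ A B : Set E, MeasurableSet A → MeasurableSet B →
      ∫⁻ α in B, p α A ∂m = ∫⁻ β in A, q β B ∂m)
    {A C : Set E} (hA : MeasurableSet A) (hC : MeasurableSet C) {g : E → ℝ≥0∞} (hg : Measurable g) :
    ∫⁻ α in C, ∫⁻ β in A, g β ∂p α ∂m = ∫⁻ β in A, g β * q β C ∂m :=
  calc ∫⁻ α in C, ∫⁻ β in A, g β ∂p α ∂m
      = ∫⁻ z in C ×ˢ A, g z.2 ∂(m ⊗ₘ p) :=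
        (Measure.setLIntegral_compProd (f := fun z => g z.2) (by fun_prop) hC hA).symm
    _ = ∫⁻ z in A ×ˢ C, g z.1 ∂(m ⊗ₘ q) := by
        rw [← map_swap_compProd_of_dual hdual, setLIntegral_map (hA.prod hC)
          (f := fun z => g z.1) (by fun_prop) measurable_swap, Set.preimage_swap_prod]
        rfl
    _ = ∫⁻ β in A, g β * q β C ∂m := by
        rw [Measure.setLIntegral_compProd (f := fun z => g z.1) (by fun_prop) hA hC]
        simp only [lintegral_const, Measure.restrict_apply_univ]

lemma measurable_chainProb (p : Kernel E E) [IsSFiniteKernel p] (n : ℕ) {A : ℕ → Set E}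
    (hA : ∀ i, MeasurableSet (A i)) : Measurable (chainProb p n A) := by
  induction n generalizing A with
  | zero => exact measurable_const
  | succ n ih =>
    exact Measurable.setLIntegral_kernel_prod_right
      (f := fun _ β => chainProb p n (fun i => A (i + 1)) β) ((ih fun i => hA _).comp measurable_snd)
      (hA 0)

lemma measurableSet_cylinder {n : ℕ} {A : ℕ → Set E} (hA : ∀ i, MeasurableSet (A i)) :
    MeasurableSet {ω : ℕ → E | ∀ i ≤ n, ω i ∈ A i} := by
  simp only [Set.ofPred_forall]
  exact .iInter fun i => .iInter fun _ => measurable_pi_apply i (hA i)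

lemma exists_cylinder_eq_of_mem_squareCylinders {S : Set (ℕ → E)}
    (hS : S ∈ squareCylinders fun _ => {s : Set E | MeasurableSet s}) :
    ∃ (n : ℕ) (A : ℕ → Set E), (∀ i, MeasurableSet (A i)) ∧ S = {ω | ∀ i ≤ n, ω i ∈ A i} := by
  obtain ⟨s, t, ht, rfl⟩ := hS
  refine ⟨s.sup id, fun i => if i ∈ s then t i else Set.univ, fun i => ?_, ?_⟩
  · dsimp only
    split_ifs
    exacts [ht i (Set.mem_univ i), .univ]
  · ext ω
    simp only [Set.mem_pi, Finset.mem_coe, Set.mem_ofPred_eq]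
    refine ⟨fun h i _ => ?_, fun h i hi => ?_⟩
    · split_ifs with hi
      exacts [h i hi, Set.mem_univ _]
    · simpa [hi] using h i (Finset.le_sup (f := id) hi)

lemma isCountablySpanning_squareCylinders :
    IsCountablySpanning (squareCylinders fun _ : ℕ => {s : Set E | MeasurableSet s}) :=
  ⟨fun _ => Set.univ, fun _ => ⟨∅, fun _ => Set.univ, fun _ _ => .univ, by simp⟩,
    Set.iUnion_const _⟩

namespace IsMarkovMeasure

lemma map_eval_zero (hP : IsMarkovMeasure p m P) : P.map (fun ω => ω 0) = m := by
  ext S hS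
  rw [Measure.map_apply (measurable_pi_apply 0) hS]
  simpa [chainProb, Set.preimage] using hP 0 (fun _ => S) fun _ => hS

lemma setLIntegral_cylinder [IsSFiniteKernel p] (hP : IsMarkovMeasure p m P) {n : ℕ}
    {A : ℕ → Set E} (hA : ∀ i, MeasurableSet (A i)) {g : E → ℝ≥0∞} (hg : Measurable g) :
    ∫⁻ ω in {ω | ∀ i ≤ n, ω i ∈ A i}, g (ω 0) ∂P
      = ∫⁻ α in A 0, g α * chainProb p n (fun i => A (i + 1)) α ∂m := by
  set G := chainProb p n fun i => A (i + 1)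
  have hev : Measurable fun ω : ℕ → E => ω 0 := measurable_pi_apply 0
  have hlaw : (P.restrict {ω | ∀ i ≤ n, ω i ∈ A i}).map (fun ω => ω 0)
      = (m.restrict (A 0)).withDensity G := by
    ext S hS
    have hA' : ∀ i, MeasurableSet (Function.update A 0 (A 0 ∩ S) i) := by
      intro i
      rcases eq_or_ne i 0 with rfl | hi
      · simpa using (hA 0).inter hS
      · simpa [hi] using hA i
    have htail : (fun i => Function.update A 0 (A 0 ∩ S) (i + 1)) = fun i => A (i + 1) := by
      funext i
      simp
    rw [Measure.map_apply hev hS, Measure.restrict_apply (hev hS), withDensity_apply _ hS,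
      Measure.restrict_restrict hS, eval_zero_preimage_inter_cylinder, hP n _ hA', htail, Function.update_self, Set.inter_comm]
  calc ∫⁻ ω in {ω | ∀ i ≤ n, ω i ∈ A i}, g (ω 0) ∂P
      = ∫⁻ α, g α ∂((m.restrict (A 0)).withDensity G) := by rw [← hlaw, lintegral_map hg hev]
    _ = ∫⁻ α in A 0, g α * G α ∂m := by
        rw [lintegral_withDensity_eq_lintegral_mul _ (measurable_chainProb p n fun i => hA _) hg]
        simp only [Pi.mul_apply, mul_comm]
        rfl

lemma map_tailHead [IsProbabilityMeasure m] [IsMarkovKernel p] [IsMarkovKernel q]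
    [IsProbabilityMeasure P] (hP : IsMarkovMeasure p m P)
    (hdual : ∀ A B : Set E, MeasurableSet A → MeasurableSet B →
      ∫⁻ α in B, p α A ∂m = ∫⁻ β in A, q β B ∂m) :
    P.map tailHead = P ⊗ₘ q.comap (fun ω => ω 0) (measurable_pi_apply 0) := by
  have := Measure.isProbabilityMeasure_map (μ := P) measurable_tailHead.aemeasurable
  refine ext_of_generate_finite _
    (generateFrom_eq_prod generateFrom_squareCylinders MeasurableSpace.generateFrom_measurableSet
      isCountablySpanning_squareCylinders isCountablySpanning_measurableSet).symm
    ((isPiSystem_squareCylinders (fun _ => MeasurableSpace.isPiSystem_measurableSet)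
      fun _ => .univ).prod MeasurableSpace.isPiSystem_measurableSet) ?_ (by simp)
  rintro _ ⟨S, hS, C, hC, rfl⟩
  obtain ⟨n, A, hA, rfl⟩ := exists_cylinder_eq_of_mem_squareCylinders hS
  have hA' : ∀ i, MeasurableSet ((fun | 0 => C | k + 1 => A k : ℕ → Set E) i)
    | 0 => hC
    | k + 1 => hA k
  calc P.map tailHead ({ω | ∀ i ≤ n, ω i ∈ A i} ×ˢ C)
      = ∫⁻ α in C, ∫⁻ β in A 0, chainProb p n (fun i => A (i + 1)) β ∂p α ∂m := by
        rw [Measure.map_apply measurable_tailHead ((measurableSet_cylinder hA).prod hC),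
          tailHead_preimage_cylinder_prod, hP _ _ hA']
        rfl
    _ = ∫⁻ β in A 0, chainProb p n (fun i => A (i + 1)) β * q β C ∂m :=
        setLIntegral_setLIntegral_of_dual hdual (hA 0) hC (measurable_chainProb p n fun i => hA _)
    _ = ∫⁻ ω in {ω | ∀ i ≤ n, ω i ∈ A i}, q (ω 0) C ∂P := by
        simp_rw [mul_comm _ (q _ C)]
        exact (hP.setLIntegral_cylinder hA (q.measurable_coe hC)).symm
    _ = (P ⊗ₘ q.comap (fun ω => ω 0) (measurable_pi_apply 0)) ({ω | ∀ i ≤ n, ω i ∈ A i} ×ˢ C) := by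
        rw [Measure.compProd_apply_prod (measurableSet_cylinder hA) hC]
        rfl

end IsMarkovMeasure

end MarkovMeasure

section SkewProduct

variable {E M : Type*} [MeasurableSpace E] [MeasurableSpace M]

noncomputable def Kernel.fiberPushforward (κ : Kernel E M) (f : E → M → M) : Kernel E M :=
  (Kernel.id ×ₖ κ).map fun z => f z.1 z.2

instance (κ : Kernel E M) [IsFiniteKernel κ] (f : E → M → M) :
    IsFiniteKernel (Kernel.fiberPushforward κ f) :=
  Kernel.IsFiniteKernel.map _ _

lemma Kernel.fiberPushforward_apply (κ : Kernel E M) [IsSFiniteKernel κ] {f : E → M → M}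
    (hf : Measurable fun z : E × M => f z.1 z.2) (β : E) :
    Kernel.fiberPushforward κ f β = (κ β).map (f β) := by
  rw [Kernel.fiberPushforward, Kernel.map_apply _ hf, Kernel.prod_apply, Kernel.id_apply,
    Measure.dirac_prod, Measure.map_map hf measurable_prodMk_left]
  rfl

lemma measurable_skewF {f : E → M → M} (hf : Measurable fun z : E × M => f z.1 z.2) :
    Measurable (skewF f) :=
  .prodMk (by fun_prop) (hf.comp (by fun_prop : Measurable fun z : (ℕ → E) × M => (z.1 0, z.2)))

lemma IsMarkovMeasure.map_skewF_compProd {p q : Kernel E E} {m : Measure E} {P : Measure (ℕ → E)}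
    [IsProbabilityMeasure m] [IsMarkovKernel p] [IsMarkovKernel q] [IsProbabilityMeasure P]
    (hP : IsMarkovMeasure p m P)
    (hdual : ∀ A B : Set E, MeasurableSet A → MeasurableSet B →
      ∫⁻ α in B, p α A ∂m = ∫⁻ β in A, q β B ∂m)
    (κ : Kernel E M) [IsMarkovKernel κ] {f : E → M → M} (hf : Measurable fun z : E × M => f z.1 z.2) :
    (P ⊗ₘ κ.comap (fun ω => ω 0) (measurable_pi_apply 0)).map (skewF f)
      = P ⊗ₘ (Kernel.fiberPushforward κ f ∘ₖ q).comap (fun ω => ω 0) (measurable_pi_apply 0) := by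
  have := Measure.isProbabilityMeasure_map (μ := P ⊗ₘ κ.comap (fun ω => ω 0) (measurable_pi_apply 0))
    (measurable_skewF hf).aemeasurable
  refine Measure.ext_prod fun {A B} hA hB => ?_
  set η := Kernel.fiberPushforward κ f
  have hη : ∀ β, η β B = κ β (f β ⁻¹' B) := fun β => by
    rw [Kernel.fiberPushforward_apply κ hf,
      Measure.map_apply (f := f β) (hf.comp measurable_prodMk_left) hB]
  have hslice : ∀ ω : ℕ → E, κ (ω 0) (Prod.mk ω ⁻¹' (skewF f ⁻¹' (A ×ˢ B)))
      = (tailHead ⁻¹' (A ×ˢ Set.univ)).indicator (fun ω => η (ω 0) B) ω := by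
    intro ω
    by_cases hω : (fun n => ω (n + 1)) ∈ A
    · simp [skewF, tailHead, hω, hη, Set.preimage]
    · simp [skewF, tailHead, hω, Set.preimage]
  calc (P ⊗ₘ κ.comap (fun ω => ω 0) (measurable_pi_apply 0)).map (skewF f) (A ×ˢ B)
      = ∫⁻ ω in tailHead ⁻¹' (A ×ˢ Set.univ), η (tailHead ω).2 B ∂P := by
        rw [Measure.map_apply (measurable_skewF hf) (hA.prod hB),
          Measure.compProd_apply (measurable_skewF hf (hA.prod hB))]
        simp only [Kernel.comap_apply, hslice]
        exact lintegral_indicator (measurable_tailHead (hA.prod .univ)) _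
    _ = ∫⁻ z in A ×ˢ Set.univ, η z.2 B ∂(P ⊗ₘ q.comap (fun ω => ω 0) (measurable_pi_apply 0)) := by
        rw [← hP.map_tailHead hdual, setLIntegral_map (hA.prod .univ)
          (f := fun z : (ℕ → E) × E => η z.2 B) ((η.measurable_coe hB).comp measurable_snd)
          measurable_tailHead]
    _ = ∫⁻ ω in A, (η ∘ₖ q) (ω 0) B ∂P := by
        rw [Measure.setLIntegral_compProd (f := fun z : (ℕ → E) × E => η z.2 B)
          ((η.measurable_coe hB).comp measurable_snd) hA .univ]
        simp [Kernel.comp_apply' _ _ _ hB]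
    _ = (P ⊗ₘ (η ∘ₖ q).comap (fun ω => ω 0) (measurable_pi_apply 0)) (A ×ˢ B) := by
        rw [Measure.compProd_apply_prod hA hB]
        rfl

end SkewProduct

theorem invariant_iff_disintegration_general {E M : Type*}
    [MeasurableSpace E] [MeasurableSpace M] [StandardBorelSpace M]
    (p q : ProbabilityTheory.Kernel E E) [IsMarkovKernel p] [IsMarkovKernel q]
    (m : Measure E) [IsProbabilityMeasure m]
    (hdual : ∀ A B : Set E, MeasurableSet A → MeasurableSet B →
      ∫⁻ α in B, p α A ∂m = ∫⁻ β in A, q β B ∂m)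
    (f : E → M → M) (hf : Measurable fun z : E × M => f z.1 z.2)
    (P : Measure (ℕ → E)) [IsProbabilityMeasure P] (hP : IsMarkovMeasure p m P)
    (μhat : Measure ((ℕ → E) × M)) [IsProbabilityMeasure μhat]
    (μa : E → Measure M) (hμprob : ∀ α, IsProbabilityMeasure (μa α))
    (hμmeas : ∀ B : Set M, MeasurableSet B → Measurable fun α => μa α B)
    (hdis : ∀ (A : Set (ℕ → E)) (B : Set M), MeasurableSet A → MeasurableSet B →
      μhat (A ×ˢ B) = ∫⁻ ω in A, μa (ω 0) B ∂P) :
    μhat.map (skewF f) = μhat ↔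
      (∀ᵐ α ∂m, μa α = (q α : Measure E).bind (fun β => (μa β).map (f β))) := by
  let κ : Kernel E M := ⟨μa, Measure.measurable_of_measurable_coe _ hμmeas⟩
  have : IsMarkovKernel κ := ⟨hμprob⟩
  have hμhat : μhat = P ⊗ₘ κ.comap (fun ω => ω 0) (measurable_pi_apply 0) :=
    Measure.ext_prod fun {A B} hA hB => by
      rw [hdis A B hA hB, Measure.compProd_apply_prod hA hB]
      rfl
  rw [hμhat, hP.map_skewF_compProd hdual κ hf, Measure.compProd_comap_eq_iff, hP.map_eval_zero]
  have hη : ⇑(Kernel.fiberPushforward κ f) = fun β => (μa β).map (f β) :=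
    funext (Kernel.fiberPushforward_apply κ hf)
  refine Filter.eventually_congr (.of_forall fun α => ?_)
  rw [Kernel.comp_apply, hη, eq_comm]
  rfl

/-- A probability measure `μ̂` on `Σ × M` with first marginal `ℙ` whose
disintegration has the form `μ̂_ω = μ_{ω₀}` is invariant under the skew product `F` iff
`μ_α = ∫ (f_β)_* μ_β q(α,dβ)` for `m`-almost every `α`. -/
theorem invariant_iff_disintegration {E M : Type*}
    [MeasurableSpace E] [StandardBorelSpace E] [MeasurableSpace M] [StandardBorelSpace M]
    (p q : ProbabilityTheory.Kernel E E) [IsMarkovKernel p] [IsMarkovKernel q]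
    (m : Measure E) [IsProbabilityMeasure m]
    (hstat : ∀ A : Set E, MeasurableSet A → m A = ∫⁻ α, p α A ∂m)
    (huniq : ∀ m' : Measure E, IsProbabilityMeasure m' →
      (∀ A : Set E, MeasurableSet A → m' A = ∫⁻ α, p α A ∂m') → m' = m)
    (hdual : ∀ A B : Set E, MeasurableSet A → MeasurableSet B →
      ∫⁻ α in B, p α A ∂m = ∫⁻ β in A, q β B ∂m)
    (f : E → M → M) (hf : Measurable fun z : E × M => f z.1 z.2)
    (P : Measure (ℕ → E)) [IsProbabilityMeasure P] (hP : IsMarkovMeasure p m P)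
    (μhat : Measure ((ℕ → E) × M)) [IsProbabilityMeasure μhat]
    (μa : E → Measure M) (hμprob : ∀ α, IsProbabilityMeasure (μa α))
    (hμmeas : ∀ B : Set M, MeasurableSet B → Measurable fun α => μa α B)
    (hmarg : μhat.map Prod.fst = P)
    (hdis : ∀ (A : Set (ℕ → E)) (B : Set M), MeasurableSet A → MeasurableSet B →
      μhat (A ×ˢ B) = ∫⁻ ω in A, μa (ω 0) B ∂P) :
    μhat.map (skewF f) = μhat ↔
      (∀ᵐ α ∂m, μa α = (q α : Measure E).bind (fun β => (μa β).map (f β))) :=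
  invariant_iff_disintegration_general p q m hdual f hf P hP μhat μa hμprob hμmeas hdis
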